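/- arXiv:1107.5511 — 2 statements merged into one kernel-verified Lean document; each statement's English description precedes it below -/
import Mathlib

section
/- In a weakly boolean inverse semigroup, for b ≤ a there is a unique element a \ b with b ∨ (a \ b) = a and b ∧ (a \ b) = 0 (i.e., b and a\b are orthogonal); moreover, for t ≤ s and v ≤ u, one has (s \ t)(u \ v) = su \ (sv ∨ tu ∨ tv). -/
class InvSemigroup (S : Type*) extends Mul S, Inv S where
  mul_assoc : ∀ a b c : S, a * b * c = a * (b * c)
  mul_inv_mul : ∀ a : S, a * a⁻¹ * a = a
  inv_mul_inv : ∀ a : S, a⁻¹ * a * a⁻¹ = a⁻¹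
  idem_comm : ∀ e f : S, e * e = e → f * f = f → e * f = f * e

/-- The natural partial order on an inverse semigroup: `a ≤ b` iff `a = b * (a⁻¹ * a)`. -/
def nle {S : Type*} [InvSemigroup S] (a b : S) : Prop := a = b * (a⁻¹ * a)

def IsIdem {S : Type*} [Mul S] (e : S) : Prop := e * e = e

/-- Two elements are compatible if `a⁻¹ * b` and `a * b⁻¹` are idempotents. -/
def Compat {S : Type*} [InvSemigroup S] (a b : S) : Prop :=
  IsIdem (a⁻¹ * b) ∧ IsIdem (a * b⁻¹)

def PairwiseCompat {S : Type*} [InvSemigroup S] (X : Set S) : Prop :=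
  ∀ a ∈ X, ∀ b ∈ X, Compat a b

/-- `s` is the join (least upper bound) of `X` with respect to the natural partial order. -/
def IsJoin {S : Type*} [InvSemigroup S] (X : Set S) (s : S) : Prop :=
  (∀ a ∈ X, nle a s) ∧ ∀ u : S, (∀ a ∈ X, nle a u) → nle s u

/-- A distributive inverse semigroup: finite (binary) compatible joins exist and
multiplication distributes over them. -/
class DistInvSemigroup (S : Type*) extends InvSemigroup S where
  join2 : ∀ a b : S, Compat a b → ∃ j : S, IsJoin {a, b} j
  distl : ∀ a b j c : S, IsJoin {a, b} j → IsJoin {c * a, c * b} (c * j)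
  distr : ∀ a b j c : S, IsJoin {a, b} j → IsJoin {a * c, b * c} (j * c)

def downSet {S : Type*} [InvSemigroup S] (a : S) : Set S := {x | nle x a}

def IsOrderIdeal {S : Type*} [InvSemigroup S] (A : Set S) : Prop :=
  ∀ a ∈ A, ∀ x : S, nle x a → x ∈ A

class DistInvSemigroupWithZero (S : Type*) extends DistInvSemigroup S, Zero S where
  zero_mul : ∀ a : S, 0 * a = 0
  mul_zero : ∀ a : S, a * 0 = 0

/-- A weakly boolean inverse semigroup: a distributive inverse semigroup whose
semilattice of idempotents is a generalized boolean algebra (relative complements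
of idempotents exist). -/
class WeaklyBooleanInvSemigroup (S : Type*) extends DistInvSemigroupWithZero S where
  idem_rel_compl : ∀ e f : S, IsIdem e → IsIdem f → nle f e →
    ∃ g : S, IsIdem g ∧ nle g e ∧ f * g = 0 ∧ IsJoin {f, g} e

/-- Orthogonality: `x⁻¹y = 0 = xy⁻¹`. -/
def Orthog {S : Type*} [DistInvSemigroupWithZero S] (x y : S) : Prop :=
  x⁻¹ * y = 0 ∧ x * y⁻¹ = 0

section Helpers

variable {S : Type*}

section Basic
variable [InvSemigroup S]

private instance invSemigroupToSemigroup : Semigroup S := ⟨InvSemigroup.mul_assoc⟩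

private lemma mim (a : S) : a * a⁻¹ * a = a := InvSemigroup.mul_inv_mul a
private lemma imi (a : S) : a⁻¹ * a * a⁻¹ = a⁻¹ := InvSemigroup.inv_mul_inv a
private lemma icomm {e f : S} (he : IsIdem e) (hf : IsIdem f) : e * f = f * e :=
  InvSemigroup.idem_comm e f he hf

private lemma idem_ii (a : S) : IsIdem (a⁻¹ * a) := by
  show a⁻¹ * a * (a⁻¹ * a) = a⁻¹ * a
  calc a⁻¹ * a * (a⁻¹ * a) = a⁻¹ * a * a⁻¹ * a := by rw [← mul_assoc]
  _ = a⁻¹ * a := by rw [imi]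

private lemma idem_rr (a : S) : IsIdem (a * a⁻¹) := by
  show a * a⁻¹ * (a * a⁻¹) = a * a⁻¹
  calc a * a⁻¹ * (a * a⁻¹) = a * a⁻¹ * a * a⁻¹ := by rw [← mul_assoc]
  _ = a * a⁻¹ := by rw [mim]

private lemma invuniq {a x : S} (h1 : a * x * a = a) (h2 : x * a * x = x) : x = a⁻¹ := by
  have hax : IsIdem (a * x) := by
    show a * x * (a * x) = a * x
    calc a * x * (a * x) = a * x * a * x := by rw [← mul_assoc]
    _ = a * x := by rw [h1]
  have hxa : IsIdem (x * a) := by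
    show x * a * (x * a) = x * a
    calc x * a * (x * a) = x * a * x * a := by rw [← mul_assoc]
    _ = x * a := by rw [h2]
  have hx : x = x * a * a⁻¹ := by
    calc x = x * a * x := h2.symm
    _ = x * (a * a⁻¹ * a) * x := by rw [mim]
    _ = x * ((a * a⁻¹) * (a * x)) := by simp only [mul_assoc]
    _ = x * ((a * x) * (a * a⁻¹)) := by rw [icomm (idem_rr a) hax]
    _ = (x * a * x) * (a * a⁻¹) := by simp only [mul_assoc]
    _ = x * (a * a⁻¹) := by rw [h2]
    _ = x * a * a⁻¹ := by rw [mul_assoc]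
  have hinv : a⁻¹ = x * a * a⁻¹ := by
    calc a⁻¹ = a⁻¹ * a * a⁻¹ := (imi a).symm
    _ = a⁻¹ * (a * x * a) * a⁻¹ := by rw [h1]
    _ = (a⁻¹ * a) * (x * a) * a⁻¹ := by simp only [mul_assoc]
    _ = (x * a) * (a⁻¹ * a) * a⁻¹ := by rw [icomm (idem_ii a) hxa]
    _ = x * a * (a⁻¹ * a * a⁻¹) := by simp only [mul_assoc]
    _ = x * a * a⁻¹ := by rw [imi]
  exact hx.trans hinv.symm

private lemma invinv (a : S) : (a⁻¹)⁻¹ = a :=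
  (invuniq (imi a) (mim a)).symm

private lemma minv_rev (a b : S) : (a * b)⁻¹ = b⁻¹ * a⁻¹ := by
  refine (invuniq ?_ ?_).symm
  · calc a * b * (b⁻¹ * a⁻¹) * (a * b)
        = a * ((b * b⁻¹) * (a⁻¹ * a)) * b := by simp only [mul_assoc]
    _ = a * ((a⁻¹ * a) * (b * b⁻¹)) * b := by rw [icomm (idem_rr b) (idem_ii a)]
    _ = (a * a⁻¹ * a) * (b * b⁻¹ * b) := by simp only [mul_assoc]
    _ = a * b := by rw [mim, mim]
  · calc b⁻¹ * a⁻¹ * (a * b) * (b⁻¹ * a⁻¹)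
        = b⁻¹ * ((a⁻¹ * a) * (b * b⁻¹)) * a⁻¹ := by simp only [mul_assoc]
    _ = b⁻¹ * ((b * b⁻¹) * (a⁻¹ * a)) * a⁻¹ := by rw [icomm (idem_ii a) (idem_rr b)]
    _ = (b⁻¹ * b * b⁻¹) * (a⁻¹ * a * a⁻¹) := by simp only [mul_assoc]
    _ = b⁻¹ * a⁻¹ := by rw [imi, imi]

private lemma idem_inv {e : S} (he : IsIdem e) : e⁻¹ = e := by
  have h : e * e * e = e := by rw [he, he]
  exact (invuniq h h).symm

private lemma idem_mul {e f : S} (he : IsIdem e) (hf : IsIdem f) : IsIdem (e * f) := by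
  show e * f * (e * f) = e * f
  calc e * f * (e * f) = e * (f * e) * f := by simp only [mul_assoc]
  _ = e * (e * f) * f := by rw [icomm hf he]
  _ = (e * e) * (f * f) := by simp only [mul_assoc]
  _ = e * f := by rw [he, hf]

private lemma nle_refl (a : S) : nle a a := by
  show a = a * (a⁻¹ * a)
  rw [← mul_assoc, mim]

private lemma nle_of_mul_idem {e : S} (b : S) (he : IsIdem e) : nle (b * e) b := by
  show b * e = b * ((b * e)⁻¹ * (b * e))
  rw [minv_rev, idem_inv he]
  calc b * e = (b * b⁻¹ * b) * (e * e) := by rw [mim, he]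
  _ = b * ((b⁻¹ * b) * e * e) := by simp only [mul_assoc]
  _ = b * (e * (b⁻¹ * b) * e) := by rw [icomm (idem_ii b) he]
  _ = b * (e * b⁻¹ * (b * e)) := by simp only [mul_assoc]

private lemma nle_of_idem_mul {e : S} (b : S) (he : IsIdem e) : nle (e * b) b := by
  show e * b = b * ((e * b)⁻¹ * (e * b))
  rw [minv_rev, idem_inv he]
  calc e * b = e * (b * b⁻¹ * b) := by rw [mim]
  _ = (e * (b * b⁻¹)) * b := by simp only [mul_assoc]
  _ = ((b * b⁻¹) * e) * b := by rw [icomm he (idem_rr b)]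
  _ = b * (b⁻¹ * (e * e) * b) := by rw [he]; simp only [mul_assoc]
  _ = b * (b⁻¹ * e * (e * b)) := by simp only [mul_assoc]

private lemma nle_mul_dom {a b : S} (h : nle a b) : a * (b⁻¹ * b) = a := by
  conv_lhs => rw [h]
  calc b * (a⁻¹ * a) * (b⁻¹ * b) = b * ((a⁻¹ * a) * (b⁻¹ * b)) := by simp only [mul_assoc]
  _ = b * ((b⁻¹ * b) * (a⁻¹ * a)) := by rw [icomm (idem_ii a) (idem_ii b)]
  _ = (b * b⁻¹ * b) * (a⁻¹ * a) := by simp only [mul_assoc]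
  _ = b * (a⁻¹ * a) := by rw [mim]
  _ = a := h.symm

private lemma nle_left {a b : S} (h : nle a b) : a * a⁻¹ * b = a := by
  have hinv : a⁻¹ = (a⁻¹ * a) * b⁻¹ := by
    conv_lhs => rw [h]
    rw [minv_rev, idem_inv (idem_ii a)]
  calc a * a⁻¹ * b = a * ((a⁻¹ * a) * b⁻¹) * b := by rw [← hinv]
  _ = (a * a⁻¹ * a) * (b⁻¹ * b) := by simp only [mul_assoc]
  _ = a * (b⁻¹ * b) := by rw [mim]
  _ = a := nle_mul_dom h

private lemma nle_trans {a b c : S} (h1 : nle a b) (h2 : nle b c) : nle a c := by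
  have : a = c * ((b⁻¹ * b) * (a⁻¹ * a)) := by
    calc a = b * (a⁻¹ * a) := h1
    _ = (c * (b⁻¹ * b)) * (a⁻¹ * a) := by rw [← h2]
    _ = c * ((b⁻¹ * b) * (a⁻¹ * a)) := by rw [mul_assoc]
  rw [this]
  exact nle_of_mul_idem c (idem_mul (idem_ii b) (idem_ii a))

private lemma nle_antisymm {a b : S} (h1 : nle a b) (h2 : nle b a) : a = b := by
  calc a = a * (b⁻¹ * b) := (nle_mul_dom h1).symm
  _ = b := h2.symm

private lemma nle_mul_left {a b : S} (c : S) (h : nle a b) : nle (c * a) (c * b) := by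
  have : c * a = (c * b) * (a⁻¹ * a) := by rw [mul_assoc, ← h]
  rw [this]
  exact nle_of_mul_idem _ (idem_ii a)

private lemma nle_mul_right {a b : S} (c : S) (h : nle a b) : nle (a * c) (b * c) := by
  have : a * c = (a * a⁻¹) * (b * c) := by
    rw [← mul_assoc, nle_left h]
  rw [this]
  exact nle_of_idem_mul _ (idem_rr a)

private lemma nle_inv {a b : S} (h : nle a b) : nle a⁻¹ b⁻¹ := by
  have : a⁻¹ = (a⁻¹ * a) * b⁻¹ := by
    conv_lhs => rw [h]
    rw [minv_rev, idem_inv (idem_ii a)]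
  rw [this]
  exact nle_of_idem_mul _ (idem_ii a)

private lemma ieq {e : S} (h : IsIdem e) : e * e = e := h

private lemma inv_mul_of_nle {c s : S} (h : nle c s) : s⁻¹ * c = c⁻¹ * c := by
  have h1 : c⁻¹ = (c⁻¹ * c) * s⁻¹ := by
    conv_lhs => rw [h]
    rw [minv_rev, idem_inv (idem_ii c)]
  have key : (s⁻¹ * s) * (c⁻¹ * c) = c⁻¹ * c := by
    calc (s⁻¹ * s) * (c⁻¹ * c) = (c⁻¹ * c) * (s⁻¹ * s) := icomm (idem_ii s) (idem_ii c)
    _ = ((c⁻¹ * c) * (c⁻¹ * c)) * (s⁻¹ * s) := by rw [ieq (idem_ii c)]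
    _ = (c⁻¹ * c) * ((c⁻¹ * c) * (s⁻¹ * s)) := by simp only [mul_assoc]
    _ = (c⁻¹ * c) * ((s⁻¹ * s) * (c⁻¹ * c)) := by rw [icomm (idem_ii c) (idem_ii s)]
    _ = ((c⁻¹ * c) * s⁻¹) * (s * (c⁻¹ * c)) := by simp only [mul_assoc]
    _ = c⁻¹ * c := by rw [← h1, ← h]
  calc s⁻¹ * c = s⁻¹ * (s * (c⁻¹ * c)) := by conv_lhs => rw [h]
  _ = (s⁻¹ * s) * (c⁻¹ * c) := by simp only [mul_assoc]
  _ = c⁻¹ * c := key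

private lemma mul_inv_of_nle {c s : S} (h : nle c s) : s * c⁻¹ = c * c⁻¹ := by
  have := inv_mul_of_nle (nle_inv h)
  rwa [invinv, invinv] at this

private lemma join_unique {X : Set S} {j1 j2 : S} (h1 : IsJoin X j1) (h2 : IsJoin X j2) :
    j1 = j2 :=
  nle_antisymm (h1.2 j2 h2.1) (h2.2 j1 h1.1)

private lemma join_pair_inv {a b j : S} (h : IsJoin ({a, b} : Set S) j) :
    IsJoin ({a⁻¹, b⁻¹} : Set S) j⁻¹ := by
  constructor
  · intro x hx
    rcases hx with hx | hx
    · rw [hx]; exact nle_inv (h.1 a (by left; rfl))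
    · rw [Set.mem_singleton_iff] at hx
      rw [hx]; exact nle_inv (h.1 b (by right; rfl))
  · intro u hu
    have ha := hu a⁻¹ (by left; rfl)
    have hb := hu b⁻¹ (by right; rfl)
    have : nle j u⁻¹ := by
      apply h.2
      intro x hx
      rcases hx with hx | hx
      · rw [hx, ← invinv a]; exact nle_inv ha
      · rw [Set.mem_singleton_iff] at hx
        rw [hx, ← invinv b]; exact nle_inv hb
    have := nle_inv this
    rwa [invinv] at this

end Basic

section WithZero
variable [DistInvSemigroupWithZero S]

private lemma z_mul (a : S) : 0 * a = 0 := DistInvSemigroupWithZero.zero_mul a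
private lemma mul_z (a : S) : a * 0 = 0 := DistInvSemigroupWithZero.mul_zero a

private lemma inv_z : (0 : S)⁻¹ = 0 := by
  calc (0 : S)⁻¹ = 0⁻¹ * 0 * 0⁻¹ := (imi 0).symm
  _ = 0 := by rw [mul_z, z_mul]

private lemma nle_z (a : S) : nle (0 : S) a := by
  show (0 : S) = a * (0⁻¹ * 0)
  rw [inv_z, z_mul, mul_z]

end WithZero

end Helpers

/-- In a weakly boolean inverse semigroup, relative complements `a \ b` exist
uniquely for `b ≤ a`, and `(s \ t)(u \ v) = su \ (sv ∨ tu ∨ tv)` for `t ≤ s`,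
`v ≤ u`. -/
theorem stmt17 {S : Type*} [WeaklyBooleanInvSemigroup S] :
    (∀ a b : S, nle b a →
      ∃! c : S, nle c a ∧ Orthog b c ∧ IsJoin {b, c} a) ∧
    (∀ s t u v ct cu w : S, nle t s → nle v u →
      (nle ct s ∧ Orthog t ct ∧ IsJoin {t, ct} s) →
      (nle cu u ∧ Orthog v cu ∧ IsJoin {v, cu} u) →
      IsJoin {s * v, t * u, t * v} w →
      nle (ct * cu) (s * u) ∧ Orthog w (ct * cu) ∧
        IsJoin {w, ct * cu} (s * u)) := by
  constructor
  · -- Part 1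
    intro a b hba
    have hdd : nle (b⁻¹ * b) (a⁻¹ * a) :=
      nle_trans (nle_mul_right b (nle_inv hba)) (nle_mul_left a⁻¹ hba)
    obtain ⟨g, hg, hgle, hbg, hj⟩ :=
      WeaklyBooleanInvSemigroup.idem_rel_compl (a⁻¹ * a) (b⁻¹ * b) (idem_ii a) (idem_ii b) hdd
    have hcle : nle (a * g) a := nle_of_mul_idem a hg
    have horth : Orthog b (a * g) := by
      constructor
      · have hba' : b⁻¹ * a = b⁻¹ * b := by
          have h0 := inv_mul_of_nle hba
          calc b⁻¹ * a = (a⁻¹ * b)⁻¹ := by rw [minv_rev, invinv]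
          _ = (b⁻¹ * b)⁻¹ := by rw [h0]
          _ = b⁻¹ * b := idem_inv (idem_ii b)
        calc b⁻¹ * (a * g) = (b⁻¹ * a) * g := by rw [mul_assoc]
        _ = (b⁻¹ * b) * g := by rw [hba']
        _ = 0 := hbg
      · have hbg0 : b * g = 0 := by
          calc b * g = (b * b⁻¹ * b) * g := by rw [mim]
          _ = b * ((b⁻¹ * b) * g) := by simp only [mul_assoc]
          _ = b * 0 := by rw [hbg]
          _ = 0 := mul_z b
        calc b * (a * g)⁻¹ = b * (g * a⁻¹) := by rw [minv_rev, idem_inv hg]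
        _ = (b * g) * a⁻¹ := by rw [mul_assoc]
        _ = 0 := by rw [hbg0, z_mul]
    have hjoin : IsJoin {b, a * g} a := by
      have hd := DistInvSemigroup.distl (b⁻¹ * b) g (a⁻¹ * a) a hj
      have e1 : a * (b⁻¹ * b) = b := hba.symm
      have e2 : a * (a⁻¹ * a) = a := by rw [← mul_assoc, mim]
      rwa [e1, e2] at hd
    have claim : ∀ c c' : S, Orthog b c → IsJoin {b, c'} a → nle c a → nle c c' := by
      intro c c' ho hj' hca
      have hd1 := DistInvSemigroup.distl b c' a (c * c⁻¹) hj'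
      have hd2 := DistInvSemigroup.distr (c * c⁻¹ * b) (c * c⁻¹ * c') (c * c⁻¹ * a)
        (c⁻¹ * c) hd1
      have ez : c * c⁻¹ * b * (c⁻¹ * c) = 0 := by
        have hcb : c⁻¹ * b = 0 := by
          calc c⁻¹ * b = (b⁻¹ * c)⁻¹ := by rw [minv_rev, invinv]
          _ = 0 := by rw [ho.1, inv_z]
        calc c * c⁻¹ * b * (c⁻¹ * c) = c * (c⁻¹ * b) * (c⁻¹ * c) := by
              rw [mul_assoc c c⁻¹ b]
        _ = 0 := by rw [hcb, mul_z, z_mul]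
      have ec : c * c⁻¹ * a * (c⁻¹ * c) = c := by
        rw [nle_left hca, ← mul_assoc, mim]
      rw [ez, ec] at hd2
      have hcy : nle c (c * c⁻¹ * c' * (c⁻¹ * c)) := by
        apply hd2.2
        intro x hx
        simp only [Set.mem_insert_iff, Set.mem_singleton_iff] at hx
        rcases hx with rfl | rfl
        · exact nle_z _
        · exact nle_refl _
      have hyc' : nle (c * c⁻¹ * c' * (c⁻¹ * c)) c' :=
        nle_trans (nle_of_mul_idem _ (idem_ii c)) (nle_of_idem_mul _ (idem_rr c))
      exact nle_trans hcy hyc'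
    refine ⟨a * g, ⟨hcle, horth, hjoin⟩, ?_⟩
    rintro c' ⟨h1', h2', h3'⟩
    exact nle_antisymm (claim c' (a * g) h2' hjoin h1') (claim (a * g) c' horth h3' hcle)
  · -- Part 2
    intro s t u v ct cu w hts hvu hct hcu hw
    obtain ⟨hctle, ⟨htc1, htc2⟩, hjs⟩ := hct
    obtain ⟨hcule, ⟨hvc1, hvc2⟩, hju⟩ := hcu
    have h1 : nle (ct * cu) (s * u) :=
      nle_trans (nle_mul_right cu hctle) (nle_mul_left s hcule)
    have hsv_su : nle (s * v) (s * u) := nle_mul_left s hvu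
    have htu_su : nle (t * u) (s * u) := nle_mul_right u hts
    have htv_tu : nle (t * v) (t * u) := nle_mul_left t hvu
    have hw2 : IsJoin {s * v, t * u} w := by
      constructor
      · intro x hx
        simp only [Set.mem_insert_iff, Set.mem_singleton_iff] at hx
        rcases hx with rfl | rfl
        · exact hw.1 _ (Set.mem_insert _ _)
        · exact hw.1 _ (Set.mem_insert_of_mem _ (Set.mem_insert _ _))
      · intro z hz
        apply hw.2
        intro x hx
        simp only [Set.mem_insert_iff, Set.mem_singleton_iff] at hx
        rcases hx with rfl | rfl | rfl
        · exact hz _ (Set.mem_insert _ _)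
        · exact hz _ (Set.mem_insert_of_mem _ rfl)
        · exact nle_trans htv_tu (hz _ (Set.mem_insert_of_mem _ rfl))
    have hsct : s⁻¹ * ct = ct⁻¹ * ct := inv_mul_of_nle hctle
    have hucu : u * cu⁻¹ = cu * cu⁻¹ := mul_inv_of_nle hcule
    have z1 : (s * v)⁻¹ * (ct * cu) = 0 := by
      rw [minv_rev]
      calc v⁻¹ * s⁻¹ * (ct * cu) = v⁻¹ * ((s⁻¹ * ct) * cu) := by simp only [mul_assoc]
      _ = v⁻¹ * ((ct⁻¹ * ct) * cu) := by rw [hsct]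
      _ = v⁻¹ * ((ct⁻¹ * ct) * (cu * cu⁻¹ * cu)) := by rw [mim]
      _ = v⁻¹ * ((ct⁻¹ * ct) * (cu * cu⁻¹) * cu) := by simp only [mul_assoc]
      _ = v⁻¹ * ((cu * cu⁻¹) * (ct⁻¹ * ct) * cu) := by rw [icomm (idem_ii ct) (idem_rr cu)]
      _ = (v⁻¹ * cu) * (cu⁻¹ * (ct⁻¹ * ct) * cu) := by simp only [mul_assoc]
      _ = 0 := by rw [hvc1, z_mul]
    have z2 : (t * u)⁻¹ * (ct * cu) = 0 := by
      rw [minv_rev]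
      calc u⁻¹ * t⁻¹ * (ct * cu) = u⁻¹ * ((t⁻¹ * ct) * cu) := by simp only [mul_assoc]
      _ = 0 := by rw [htc1, z_mul, mul_z]
    have z3 : (s * v) * (ct * cu)⁻¹ = 0 := by
      rw [minv_rev]
      calc s * v * (cu⁻¹ * ct⁻¹) = s * ((v * cu⁻¹) * ct⁻¹) := by simp only [mul_assoc]
      _ = 0 := by rw [hvc2, z_mul, mul_z]
    have z4 : (t * u) * (ct * cu)⁻¹ = 0 := by
      rw [minv_rev]
      calc t * u * (cu⁻¹ * ct⁻¹) = t * ((u * cu⁻¹) * ct⁻¹) := by simp only [mul_assoc]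
      _ = t * ((cu * cu⁻¹) * ct⁻¹) := by rw [hucu]
      _ = t * ((cu * cu⁻¹) * (ct⁻¹ * ct * ct⁻¹)) := by rw [imi]
      _ = t * ((cu * cu⁻¹) * (ct⁻¹ * ct) * ct⁻¹) := by simp only [mul_assoc]
      _ = t * ((ct⁻¹ * ct) * (cu * cu⁻¹) * ct⁻¹) := by rw [icomm (idem_rr cu) (idem_ii ct)]
      _ = (t * ct⁻¹) * (ct * (cu * cu⁻¹) * ct⁻¹) := by simp only [mul_assoc]
      _ = 0 := by rw [htc2, z_mul]
    have join00 : ∀ j : S, IsJoin {(0 : S), 0} j → j = 0 := by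
      intro j hj0
      refine nle_antisymm (hj0.2 0 ?_) (nle_z j)
      intro x hx
      simp only [Set.mem_insert_iff, Set.mem_singleton_iff, or_self] at hx
      rw [hx]; exact nle_refl 0
    have horth : Orthog w (ct * cu) := by
      constructor
      · have hd := DistInvSemigroup.distr (s * v)⁻¹ (t * u)⁻¹ w⁻¹ (ct * cu)
          (join_pair_inv hw2)
        rw [z1, z2] at hd
        exact join00 _ hd
      · have hd := DistInvSemigroup.distr (s * v) (t * u) w ((ct * cu)⁻¹) hw2
        rw [z3, z4] at hd
        exact join00 _ hd
    have hwsu : nle w (s * u) := by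
      apply hw.2
      intro x hx
      simp only [Set.mem_insert_iff, Set.mem_singleton_iff] at hx
      rcases hx with rfl | rfl | rfl
      · exact hsv_su
      · exact htu_su
      · exact nle_trans htv_tu htu_su
    have hj1 : IsJoin {s * v, s * cu} (s * u) := DistInvSemigroup.distl v cu u s hju
    have hj2 : IsJoin {t * cu, ct * cu} (s * cu) := DistInvSemigroup.distr t ct s cu hjs
    refine ⟨h1, horth, ?_, ?_⟩
    · intro x hx
      simp only [Set.mem_insert_iff, Set.mem_singleton_iff] at hx
      rcases hx with rfl | rfl
      · exact hwsu
      · exact h1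
    · intro z hz
      have hwz : nle w z := hz w (Set.mem_insert _ _)
      have hx2 : nle (ct * cu) z := hz _ (Set.mem_insert_of_mem _ rfl)
      have htcu : nle (t * cu) z :=
        nle_trans (nle_mul_left t hcule)
          (nle_trans (hw2.1 (t * u) (Set.mem_insert_of_mem _ rfl)) hwz)
      have hscu : nle (s * cu) z := by
        apply hj2.2
        intro x hx
        simp only [Set.mem_insert_iff, Set.mem_singleton_iff] at hx
        rcases hx with rfl | rfl
        · exact htcu
        · exact hx2
      have hsvz : nle (s * v) z := nle_trans (hw2.1 (s * v) (Set.mem_insert _ _)) hwz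
      apply hj1.2
      intro x hx
      simp only [Set.mem_insert_iff, Set.mem_singleton_iff] at hx
      rcases hx with rfl | rfl
      · exact hsvz
      · exact hscu
end

section
/- Let ν be a nucleus on an inverse semigroup S. Then the set S_ν of ν-closed elements with multiplication a·b = ν(ab) is an inverse semigroup, the map a ↦ ν(a) is a surjective idempotent-pure semigroup homomorphism S → S_ν, and the natural partial order of S_ν coincides with the restriction of that of S. -/
namespace IS
variable {S : Type*} [InvSemigroup S]

instance : Semigroup S := ⟨InvSemigroup.mul_assoc⟩

lemma avv (a : S) : a * a⁻¹ * a = a := InvSemigroup.mul_inv_mul a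
lemma vav (a : S) : a⁻¹ * a * a⁻¹ = a⁻¹ := InvSemigroup.inv_mul_inv a
lemma icomm {e f : S} (he : e * e = e) (hf : f * f = f) : e * f = f * e :=
  InvSemigroup.idem_comm e f he hf

lemma avv1 (a : S) : a * (a⁻¹ * a) = a := by rw [← mul_assoc, avv]
lemma vav1 (a : S) : a⁻¹ * (a * a⁻¹) = a⁻¹ := by rw [← mul_assoc, vav]
lemma avv2 (a y : S) : a * (a⁻¹ * (a * y)) = a * y := by
  rw [← mul_assoc, ← mul_assoc, avv]
lemma vav2 (a y : S) : a⁻¹ * (a * (a⁻¹ * y)) = a⁻¹ * y := by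
  rw [← mul_assoc, ← mul_assoc, vav]

lemma idem_va (a : S) : (a⁻¹ * a) * (a⁻¹ * a) = a⁻¹ * a := by
  rw [mul_assoc, vav2]
lemma idem_av (a : S) : (a * a⁻¹) * (a * a⁻¹) = a * a⁻¹ := by
  rw [mul_assoc, avv2]

lemma inv_unique {a x : S} (h1 : a * x * a = a) (h2 : x * a * x = x) : x = a⁻¹ := by
  have iax : (a * x) * (a * x) = a * x := by
    rw [show a * x * (a * x) = a * x * a * x by simp [mul_assoc], h1]
  have ixa : (x * a) * (x * a) = x * a := by
    rw [show x * a * (x * a) = x * (a * x * a) by simp [mul_assoc], h1]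
  have hx2 : x = x * a * a⁻¹ := by
    calc x = x * a * x := h2.symm
      _ = x * ((a * a⁻¹) * (a * x)) := by simp only [mul_assoc, avv2]
      _ = x * ((a * x) * (a * a⁻¹)) := by rw [icomm (idem_av a) iax]
      _ = (x * a * x) * (a * a⁻¹) := by simp only [mul_assoc]
      _ = x * (a * a⁻¹) := by rw [h2]
      _ = x * a * a⁻¹ := by rw [mul_assoc]
  have hy2 : a⁻¹ = x * a * a⁻¹ := by
    calc a⁻¹ = a⁻¹ * a * a⁻¹ := (vav a).symm
      _ = ((a⁻¹ * a) * (x * a)) * a⁻¹ := by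
          rw [show (a⁻¹ * a) * (x * a) = a⁻¹ * a by
            rw [mul_assoc a⁻¹ a (x * a), show a * (x * a) = a by rw [← mul_assoc, h1]]]
      _ = ((x * a) * (a⁻¹ * a)) * a⁻¹ := by rw [icomm (idem_va a) ixa]
      _ = x * a * a⁻¹ := by simp only [mul_assoc, vav1]
  rw [hx2, ← hy2]

lemma inv_inv (a : S) : a⁻¹⁻¹ = a := (inv_unique (vav a) (avv a)).symm

lemma idem_inv {e : S} (he : e * e = e) : e⁻¹ = e :=
  (inv_unique (by rw [he, he]) (by rw [he, he])).symm

lemma mul_inv_rev (a b : S) : (a * b)⁻¹ = b⁻¹ * a⁻¹ := by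
  refine (inv_unique ?_ ?_).symm
  · calc a * b * (b⁻¹ * a⁻¹) * (a * b)
        = a * ((b * b⁻¹) * (a⁻¹ * a)) * b := by simp only [mul_assoc]
      _ = a * ((a⁻¹ * a) * (b * b⁻¹)) * b := by rw [icomm (idem_av b) (idem_va a)]
      _ = a * b := by simp only [mul_assoc, avv2, avv1]
  · calc b⁻¹ * a⁻¹ * (a * b) * (b⁻¹ * a⁻¹)
        = b⁻¹ * ((a⁻¹ * a) * (b * b⁻¹)) * a⁻¹ := by simp only [mul_assoc]
      _ = b⁻¹ * ((b * b⁻¹) * (a⁻¹ * a)) * a⁻¹ := by rw [icomm (idem_va a) (idem_av b)]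
      _ = b⁻¹ * a⁻¹ := by simp only [mul_assoc, vav2, vav1]


/-- If `a = b * e` with `e` idempotent, then `a ≤ b`. -/
lemma le_of_right {a b e : S} (he : e * e = e) (ha : a = b * e) : nle a b := by
  have hinv : a⁻¹ = e * b⁻¹ := by rw [ha, mul_inv_rev, idem_inv he]
  show a = b * (a⁻¹ * a)
  rw [ha, mul_inv_rev, idem_inv he]
  have key : (e * b⁻¹) * (b * e) = (b⁻¹ * b) * e := by
    calc (e * b⁻¹) * (b * e) = (e * (b⁻¹ * b)) * e := by simp only [mul_assoc]
      _ = ((b⁻¹ * b) * e) * e := by rw [icomm he (idem_va b)]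
      _ = (b⁻¹ * b) * (e * e) := by rw [mul_assoc]
      _ = (b⁻¹ * b) * e := by rw [he]
  rw [key, ← mul_assoc, ← mul_assoc, avv]

/-- If `a = f * b` with `f` idempotent, then `a ≤ b`. -/
lemma le_of_left {a b f : S} (hf : f * f = f) (ha : a = f * b) : nle a b := by
  have hinv : a⁻¹ = b⁻¹ * f := by rw [ha, mul_inv_rev, idem_inv hf]
  show a = b * (a⁻¹ * a)
  rw [ha, mul_inv_rev, idem_inv hf]
  calc f * b = (f * (b * b⁻¹)) * b := by simp only [mul_assoc, avv1]
    _ = ((b * b⁻¹) * f) * b := by rw [icomm hf (idem_av b)]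
    _ = b * (b⁻¹ * f * b) := by simp only [mul_assoc]
    _ = b * (b⁻¹ * f * (f * b)) := by
        rw [show b⁻¹ * f * (f * b) = b⁻¹ * (f * f) * b by simp only [mul_assoc], hf]

/-- `a ≤ b` in the alternative form `a = (a * a⁻¹) * b`. -/
lemma nle_alt {a b : S} (h : nle a b) : a = (a * a⁻¹) * b := by
  have ha : a = b * (a⁻¹ * a) := h
  have hinv : a⁻¹ = (a⁻¹ * a) * b⁻¹ := by
    conv_lhs => rw [ha]
    rw [mul_inv_rev, idem_inv (idem_va a)]
  symm
  calc (a * a⁻¹) * b = (a * ((a⁻¹ * a) * b⁻¹)) * b := by conv_lhs => rw [hinv]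
    _ = (a * (a⁻¹ * a)) * (b⁻¹ * b) := by simp only [mul_assoc]
    _ = a * (b⁻¹ * b) := by rw [avv1]
    _ = (b * (a⁻¹ * a)) * (b⁻¹ * b) := by rw [← ha]
    _ = b * ((a⁻¹ * a) * (b⁻¹ * b)) := by simp only [mul_assoc]
    _ = b * ((b⁻¹ * b) * (a⁻¹ * a)) := by rw [icomm (idem_va a) (idem_va b)]
    _ = (b * (b⁻¹ * b)) * (a⁻¹ * a) := by simp only [mul_assoc]
    _ = b * (a⁻¹ * a) := by rw [avv1]
    _ = a := ha.symm

lemma nle_refl (a : S) : nle a a := (avv1 a).symm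

lemma nle_trans {a b c : S} (hab : nle a b) (hbc : nle b c) : nle a c := by
  have ha : a = b * (a⁻¹ * a) := hab
  have hb : b = c * (b⁻¹ * b) := hbc
  refine le_of_right (e := (b⁻¹ * b) * (a⁻¹ * a)) ?_ ?_
  · calc ((b⁻¹ * b) * (a⁻¹ * a)) * ((b⁻¹ * b) * (a⁻¹ * a))
        = ((b⁻¹ * b) * ((a⁻¹ * a) * (b⁻¹ * b))) * (a⁻¹ * a) := by simp only [mul_assoc]
      _ = ((b⁻¹ * b) * ((b⁻¹ * b) * (a⁻¹ * a))) * (a⁻¹ * a) := by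
          rw [icomm (idem_va a) (idem_va b)]
      _ = ((b⁻¹ * b) * (b⁻¹ * b)) * ((a⁻¹ * a) * (a⁻¹ * a)) := by simp only [mul_assoc]
      _ = (b⁻¹ * b) * (a⁻¹ * a) := by rw [idem_va, idem_va]
  · rw [← mul_assoc, ← hb, ← ha]

lemma nle_antisymm {a b : S} (hab : nle a b) (hba : nle b a) : a = b := by
  have ha : a = b * (a⁻¹ * a) := hab
  have hb : b = a * (b⁻¹ * b) := hba
  calc a = b * (a⁻¹ * a) := ha
    _ = (a * (b⁻¹ * b)) * (a⁻¹ * a) := by rw [← hb]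
    _ = a * ((b⁻¹ * b) * (a⁻¹ * a)) := by simp only [mul_assoc]
    _ = a * ((a⁻¹ * a) * (b⁻¹ * b)) := by rw [icomm (idem_va b) (idem_va a)]
    _ = (a * (a⁻¹ * a)) * (b⁻¹ * b) := by simp only [mul_assoc]
    _ = a * (b⁻¹ * b) := by rw [avv1]
    _ = b := hb.symm

lemma nle_inv {a b : S} (h : nle a b) : nle a⁻¹ b⁻¹ := by
  have h' := nle_alt h
  have hinv : a⁻¹ = b⁻¹ * (a * a⁻¹) := by
    conv_lhs => rw [h']
    rw [mul_inv_rev, idem_inv (idem_av a)]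
  exact le_of_right (idem_av a) hinv

lemma nle_mul_right {a b : S} (c : S) (h : nle a b) : nle (a * c) (b * c) := by
  refine le_of_left (idem_av a) ?_
  calc a * c = ((a * a⁻¹) * b) * c := by rw [← nle_alt h]
    _ = (a * a⁻¹) * (b * c) := by simp only [mul_assoc]

lemma nle_mul_left {c d : S} (a : S) (h : nle c d) : nle (a * c) (a * d) := by
  refine le_of_right (idem_va c) ?_
  have : a * c = a * (d * (c⁻¹ * c)) := by rw [← h]
  rw [this, ← mul_assoc]

lemma nle_mul {a b c d : S} (h1 : nle a b) (h2 : nle c d) : nle (a * c) (b * d) :=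
  nle_trans (nle_mul_right c h1) (nle_mul_left b h2)


lemma idem_mul {e f : S} (he : e * e = e) (hf : f * f = f) :
    (e * f) * (e * f) = e * f := by
  calc (e * f) * (e * f) = e * ((f * e) * f) := by simp only [mul_assoc]
    _ = e * ((e * f) * f) := by rw [icomm hf he]
    _ = (e * e) * (f * f) := by simp only [mul_assoc]
    _ = e * f := by rw [he, hf]

/-- Two elements below a common upper bound are compatible. -/
lemma compat_idem {x y z : S} (hx : nle x z) (hy : nle y z) :
    (x⁻¹ * y) * (x⁻¹ * y) = x⁻¹ * y := by
  have hxinv : x⁻¹ = (x⁻¹ * x) * z⁻¹ := by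
    conv_lhs => rw [show x = z * (x⁻¹ * x) from hx]
    rw [mul_inv_rev, idem_inv (idem_va x)]
  have key : x⁻¹ * y = ((x⁻¹ * x) * (z⁻¹ * z)) * (y⁻¹ * y) := by
    conv_lhs => rw [hxinv, show y = z * (y⁻¹ * y) from hy]
    simp only [mul_assoc]
  rw [key]
  exact idem_mul (idem_mul (idem_va x) (idem_va z)) (idem_va y)

section Nucleus
variable {ν : S → S}

lemma nu_mul_left (h1 : ∀ a : S, nle a (ν a)) (h2 : ∀ a b : S, nle a b → nle (ν a) (ν b))
    (h3 : ∀ a : S, ν (ν a) = ν a) (h4 : ∀ a b : S, nle (ν a * ν b) (ν (a * b)))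
    (x y : S) : ν (ν x * y) = ν (x * y) := by
  apply nle_antisymm
  · have l1 : nle (ν x * y) (ν (x * y)) :=
      nle_trans (nle_mul_left (ν x) (h1 y)) (h4 x y)
    have := h2 _ _ l1
    rwa [h3] at this
  · exact h2 _ _ (nle_mul_right y (h1 x))

lemma nu_mul_right (h1 : ∀ a : S, nle a (ν a)) (h2 : ∀ a b : S, nle a b → nle (ν a) (ν b))
    (h3 : ∀ a : S, ν (ν a) = ν a) (h4 : ∀ a b : S, nle (ν a * ν b) (ν (a * b)))
    (x y : S) : ν (x * ν y) = ν (x * y) := by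
  apply nle_antisymm
  · have l1 : nle (x * ν y) (ν (x * y)) :=
      nle_trans (nle_mul_right (ν y) (h1 x)) (h4 x y)
    have := h2 _ _ l1
    rwa [h3] at this
  · exact h2 _ _ (nle_mul_left x (h1 y))

lemma nu_mid (h1 : ∀ a : S, nle a (ν a)) (h2 : ∀ a b : S, nle a b → nle (ν a) (ν b))
    (h3 : ∀ a : S, ν (ν a) = ν a) (h4 : ∀ a b : S, nle (ν a * ν b) (ν (a * b)))
    (x y z : S) : ν (x * ν y * z) = ν (x * y * z) := by
  apply nle_antisymm
  · have l1 : nle (x * ν y * z) (ν (x * y * z)) := by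
      have s1 : nle (x * ν y * z) (ν x * ν y * ν z) :=
        nle_mul (nle_mul (h1 x) (nle_refl (ν y))) (h1 z)
      have s2 : nle (ν x * ν y * ν z) (ν (x * y) * ν z) :=
        nle_mul_right (ν z) (h4 x y)
      exact nle_trans s1 (nle_trans s2 (h4 (x * y) z))
    have := h2 _ _ l1
    rwa [h3] at this
  · exact h2 _ _ (nle_mul_right z (nle_mul_left x (h1 y)))

/-- The key fact: `ν` is idempotent-pure. -/
lemma nu_idem_pure (h1 : ∀ a : S, nle a (ν a)) (h2 : ∀ a b : S, nle a b → nle (ν a) (ν b))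
    (h3 : ∀ a : S, ν (ν a) = ν a) (h4 : ∀ a b : S, nle (ν a * ν b) (ν (a * b)))
    (a : S) (ha : ν (a * a) = ν a) : a * a = a := by
  set g := ν a with hgdef
  have hag : a = g * (a⁻¹ * a) := h1 a
  -- g * g ≤ g
  have g2_le : nle (g * g) g := by have := h4 a a; rwa [ha] at this
  -- ν (g * g) = g
  have nu_g2 : ν (g * g) = g := by
    apply nle_antisymm
    · have := h2 _ _ g2_le; rwa [h3] at this
    · have hsq : nle (a * a) (g * g) := nle_mul (h1 a) (h1 a)
      have := h2 _ _ hsq; rwa [ha] at this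
  -- g³ = g², so g² is idempotent
  obtain ⟨E, hE_idem, hgE⟩ : ∃ E, (E * E = E) ∧ g * g = g * E :=
    ⟨(g * g)⁻¹ * (g * g), idem_va _, g2_le⟩
  have g3 : g * (g * g) = g * g := by
    calc g * (g * g) = g * (g * E) := by rw [hgE]
      _ = (g * g) * E := by simp only [mul_assoc]
      _ = (g * E) * E := by rw [hgE]
      _ = g * (E * E) := by simp only [mul_assoc]
      _ = g * E := by rw [hE_idem]
      _ = g * g := hgE.symm
  have hk : (g * g) * (g * g) = g * g := by
    have t : (g * g) * (g * g) = g * (g * (g * g)) := by simp only [mul_assoc]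
    rw [t, g3, g3]
  -- g * g ≤ g * g⁻¹
  have h_e1k : (g * g⁻¹) * (g * g) = g * g := by rw [mul_assoc, avv2]
  have nle_k_e1 : nle (g * g) (g * g⁻¹) := le_of_right hk h_e1k.symm
  -- g and g * g⁻¹ have the common upper bound ν (g * g⁻¹)
  have hgG : nle g (ν (g * g⁻¹)) := by
    have := h2 _ _ nle_k_e1; rwa [nu_g2] at this
  have he1G : nle (g * g⁻¹) (ν (g * g⁻¹)) := h1 _
  -- compatibility forces g⁻¹ * g⁻¹ = g⁻¹, hence g idempotent
  have hcompat := compat_idem hgG he1G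
  rw [vav1] at hcompat
  have hgg : g * g = g := by
    have := congrArg (·⁻¹) hcompat
    simpa only [mul_inv_rev, inv_inv] using this
  -- a ≤ g with g idempotent forces a idempotent
  calc a * a = (g * (a⁻¹ * a)) * (g * (a⁻¹ * a)) := by rw [← hag]
    _ = g * (((a⁻¹ * a) * g) * (a⁻¹ * a)) := by simp only [mul_assoc]
    _ = g * ((g * (a⁻¹ * a)) * (a⁻¹ * a)) := by rw [icomm (idem_va a) hgg]
    _ = (g * g) * ((a⁻¹ * a) * (a⁻¹ * a)) := by simp only [mul_assoc]
    _ = g * (a⁻¹ * a) := by rw [hgg, idem_va]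
    _ = a := hag.symm

end Nucleus
end IS

/-- For a nucleus `ν` on an inverse semigroup `S`, the set of `ν`-closed elements
with multiplication `a · b = ν(ab)` is an inverse semigroup, `a ↦ ν(a)` is a
surjective idempotent-pure homomorphism onto it, and its natural partial order
coincides with the restriction of that of `S`. -/
theorem stmt18 {S : Type*} [InvSemigroup S] (ν : S → S)
    (h1 : ∀ a : S, nle a (ν a))
    (h2 : ∀ a b : S, nle a b → nle (ν a) (ν b))
    (h3 : ∀ a : S, ν (ν a) = ν a)
    (h4 : ∀ a b : S, nle (ν a * ν b) (ν (a * b))) :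
    let Sν := {x : S // ν x = x}
    let m : Sν → Sν → Sν := fun a b => ⟨ν (a.1 * b.1), h3 _⟩
    let i : Sν → Sν := fun a => ⟨ν (a.1⁻¹), h3 _⟩
    let h : S → Sν := fun a => ⟨ν a, h3 a⟩
    (∀ a b c : Sν, m (m a b) c = m a (m b c)) ∧
    (∀ a : Sν, m (m a (i a)) a = a) ∧
    (∀ a : Sν, m (m (i a) a) (i a) = i a) ∧
    (∀ e f : Sν, m e e = e → m f f = f → m e f = m f e) ∧
    Function.Surjective h ∧
    (∀ a b : S, h (a * b) = m (h a) (h b)) ∧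
    (∀ a : S, m (h a) (h a) = h a → a * a = a) ∧
    (∀ a b : Sν, (a = m b (m (i a) a)) ↔ nle a.1 b.1) := by
  intro Sν m i h
  refine ⟨?_, ?_, ?_, ?_, ?_, ?_, ?_, ?_⟩
  · -- associativity
    intro a b c
    apply Subtype.ext
    show ν (ν (a.1 * b.1) * c.1) = ν (a.1 * ν (b.1 * c.1))
    rw [IS.nu_mul_left h1 h2 h3 h4, IS.nu_mul_right h1 h2 h3 h4, mul_assoc]
  · -- a · a⁻¹ · a = a
    intro a
    apply Subtype.ext
    show ν (ν (a.1 * ν (a.1⁻¹)) * a.1) = a.1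
    rw [IS.nu_mul_left h1 h2 h3 h4, IS.nu_mid h1 h2 h3 h4, IS.avv, a.2]
  · -- a⁻¹ · a · a⁻¹ = a⁻¹
    intro a
    apply Subtype.ext
    show ν (ν (ν (a.1⁻¹) * a.1) * ν (a.1⁻¹)) = ν (a.1⁻¹)
    rw [IS.nu_mul_left h1 h2 h3 h4, IS.nu_mul_right h1 h2 h3 h4, mul_assoc,
      IS.nu_mul_left h1 h2 h3 h4, IS.vav1]
  · -- idempotents commute
    intro e f hee hff
    have hE : e.1 * e.1 = e.1 := by
      refine IS.nu_idem_pure h1 h2 h3 h4 e.1 ?_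
      have := congrArg Subtype.val hee
      rw [show (m e e).val = ν (e.1 * e.1) from rfl] at this
      rw [this, e.2]
    have hF : f.1 * f.1 = f.1 := by
      refine IS.nu_idem_pure h1 h2 h3 h4 f.1 ?_
      have := congrArg Subtype.val hff
      rw [show (m f f).val = ν (f.1 * f.1) from rfl] at this
      rw [this, f.2]
    apply Subtype.ext
    show ν (e.1 * f.1) = ν (f.1 * e.1)
    rw [IS.icomm hE hF]
  · -- surjectivity
    intro a
    exact ⟨a.1, Subtype.ext a.2⟩
  · -- homomorphism
    intro a b
    apply Subtype.ext
    show ν (a * b) = ν (ν a * ν b)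
    rw [IS.nu_mul_left h1 h2 h3 h4, IS.nu_mul_right h1 h2 h3 h4]
  · -- idempotent-pure
    intro a ha
    refine IS.nu_idem_pure h1 h2 h3 h4 a ?_
    have := congrArg Subtype.val ha
    rw [show (m (h a) (h a)).val = ν (ν a * ν a) from rfl] at this
    rw [IS.nu_mul_left h1 h2 h3 h4, IS.nu_mul_right h1 h2 h3 h4] at this
    exact this
  · -- the order coincides
    intro a b
    have key : (m b (m (i a) a)).val = ν (b.1 * (a.1⁻¹ * a.1)) := by
      show ν (b.1 * ν (ν (a.1⁻¹) * a.1)) = _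
      rw [IS.nu_mul_right h1 h2 h3 h4, ← mul_assoc, IS.nu_mid h1 h2 h3 h4, mul_assoc]
    constructor
    · intro heq
      have hv : a.1 = ν (b.1 * (a.1⁻¹ * a.1)) := by
        rw [← key]; exact congrArg Subtype.val heq
      have hxb : nle (b.1 * (a.1⁻¹ * a.1)) b.1 := IS.le_of_right (IS.idem_va a.1) rfl
      have hres := h2 _ _ hxb
      rw [← hv, b.2] at hres
      exact hres
    · intro hle
      apply Subtype.ext
      show a.1 = (m b (m (i a) a)).val
      rw [key, ← (show a.1 = b.1 * (a.1⁻¹ * a.1) from hle), a.2]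
end
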